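/- Let p be an odd prime, m ≥ 1, and b = (b_1,…,b_m) ∈ F_p^m with disc_{F_p}(b) > 1/p². Then there exists ℓ ∈ F_p with ℓ ≠ 0 such that Σ_{j=1}^{m} ||(ℓb_j)^/p||²_{ℝ/ℤ} ≤ 2·log p. -/

import Mathlib

open Finset Matrix

noncomputable section

/-- The sign `±1` associated to a Boolean. -/
def signb (R : Type*) [Ring R] (b : Bool) : R := if b then 1 else -1

open Classical in
/-- Uniform/counting probability of an event on a finite sample space. -/
def prob {Ω : Type*} [Fintype Ω] (E : Ω → Prop) : ℝ :=
  ((Finset.univ.filter E).card : ℝ) / (Fintype.card Ω : ℝ)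

/-- The symmetric random sign matrix determined by the Boolean data `ω`
(only the entries `ω i j` with `i ≤ j` are used); it is uniformly distributed
over symmetric `±1` matrices when `ω` is uniform. -/
def symMat (R : Type*) [Ring R] {n : ℕ} (ω : Fin n → Fin n → Bool) :
    Matrix (Fin n) (Fin n) R :=
  Matrix.of fun i j => signb R (ω (min i j) (max i j))

/-- Atom probability of a vector over `ZMod p` w.r.t. i.i.d. Rademacher signs. -/
def rho (p : ℕ) {ι : Type*} [Fintype ι] [DecidableEq ι] (w : ι → ZMod p) : ℝ :=
  ⨆ r : ZMod p, prob (fun ξ : ι → Bool => ∑ i, signb (ZMod p) (ξ i) * w i = r)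

/-- Discrepancy of a vector over `ZMod p` w.r.t. i.i.d. Rademacher signs. -/
def disc (p : ℕ) {ι : Type*} [Fintype ι] [DecidableEq ι] (w : ι → ZMod p) : ℝ :=
  ⨆ x : ZMod p,
    |prob (fun ξ : ι → Bool => ∑ i, signb (ZMod p) (ξ i) * w i = x) - 1 / (p : ℝ)|

/-- Distance from a real number to the nearest integer (the `ℝ/ℤ` norm). -/
def distRZ (x : ℝ) : ℝ := |x - round x|

/-!
Fourier inversion on `ZMod p` gives
`p · P[∑ ξᵢ wᵢ = x] - 1 = ∑_{ℓ ≠ 0} e(-ℓx/p) ∏ᵢ cos (2π (ℓwᵢ)^/p)`.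
Since `|cos (π y)| ≤ exp (-2 ‖y‖²)`, the `ℓ`-th term is at most `exp (-2 ∑ᵢ ‖(2ℓwᵢ)^/p‖²)`.
If every nonzero frequency violated the conclusion, then (applied to `2ℓ ≠ 0`, as `p` is odd)
every term would be at most `p⁻⁴`, so the discrepancy would be at most `(p - 1)/p⁵ < 1/p²`.
-/

open Real

lemma prob_eq_card_filter_div {Ω : Type*} [Fintype Ω] (E : Ω → Prop) [DecidablePred E] :
    prob E = #{ω | E ω} / Fintype.card Ω := by
  rw [prob, filter_congr_decidable]

lemma distRZ_add_intCast (x : ℝ) (k : ℤ) : distRZ (x + k) = distRZ x := by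
  rw [distRZ, distRZ, round_add_intCast, Int.cast_add, add_sub_add_right_eq_sub]

lemma distRZ_natCast_div_eq_val (p : ℕ) [NeZero p] (k : ℕ) :
    distRZ (k / p) = distRZ (((k : ZMod p).val : ℝ) / p) := by
  have hp : (p : ℝ) ≠ 0 := NeZero.ne _
  have hk : (k : ℝ) / p = (k % p : ℕ) / p + ((k / p : ℕ) : ℤ) := by
    rw [Int.cast_natCast, div_add' _ _ _ hp]
    congr 1
    exact_mod_cast (Nat.mod_add_div' k p).symm
  rw [ZMod.val_natCast, hk, distRZ_add_intCast]

lemma abs_cos_pi_mul_le_exp (y : ℝ) : |cos (π * y)| ≤ exp (-(2 * distRZ y ^ 2)) := by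
  set z := y - round y
  have hz : |z| ≤ 1 / 2 := abs_sub_round y
  have hπz : |π * z| ≤ π / 2 := by
    rw [abs_mul, abs_of_pos pi_pos]; nlinarith [pi_pos]
  have hperiod : |cos (π * y)| = cos (π * z) := by
    have hy : π * y = π * z + (round y : ℤ) * π := by simp only [z]; ring
    rw [hy, cos_add_int_mul_pi, abs_mul, abs_neg_one_zpow, one_mul, abs_of_nonneg]
    exact cos_nonneg_of_neg_pi_div_two_le_of_le (abs_le.1 hπz).1 (abs_le.1 hπz).2
  have hquad : cos (π * z) ≤ 1 - 2 * z ^ 2 := by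
    have := cos_le_one_sub_mul_cos_sq (hπz.trans (by linarith [pi_pos]))
    field_simp at this ⊢
    linarith
  calc |cos (π * y)| ≤ 1 - 2 * z ^ 2 := hperiod ▸ hquad
    _ ≤ exp (-(2 * z ^ 2)) := by linarith [add_one_le_exp (-(2 * z ^ 2))]
    _ = exp (-(2 * distRZ y ^ 2)) := by rw [distRZ, sq_abs]

lemma AddChar.map_sum_eq_prod {ι A M : Type*} [AddCommMonoid A] [CommMonoid M]
    (ψ : AddChar A M) (s : Finset ι) (f : ι → A) :
    ψ (∑ i ∈ s, f i) = ∏ i ∈ s, ψ (f i) := by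
  have := map_prod ψ.toMonoidHom (fun i => Multiplicative.ofAdd (f i)) s
  rwa [← ofAdd_sum] at this

namespace ZMod

variable {p : ℕ} [NeZero p]

lemma stdAddChar_add_stdAddChar_neg (a : ZMod p) :
    stdAddChar a + stdAddChar (-a) = 2 * (cos (2 * π * a.val / p) : ℂ) := by
  have hexp : stdAddChar a = Complex.exp ((2 * π * a.val / p : ℝ) * Complex.I) := by
    rw [stdAddChar_apply, toCircle_apply]
    push_cast
    ring_nf
  rw [AddChar.map_neg_eq_inv, hexp, ← Complex.exp_neg, Complex.ofReal_cos, Complex.two_cos,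
    neg_mul]

lemma abs_cos_two_pi_val_div_le_exp (a : ZMod p) :
    |cos (2 * π * a.val / p)| ≤ exp (-(2 * distRZ ((2 * a).val / p) ^ 2)) := by
  have h2a : 2 * a = ((2 * a.val : ℕ) : ZMod p) := by rw [Nat.cast_mul, natCast_zmod_val]; rfl
  have harg : 2 * π * a.val / p = π * ((2 * a.val : ℕ) / p) := by push_cast; ring
  rw [harg, h2a, ← distRZ_natCast_div_eq_val]
  exact abs_cos_pi_mul_le_exp _

variable {ι : Type*} [Fintype ι]

lemma prod_abs_cos_le_exp (w : ι → ZMod p) (l : ZMod p) :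
    ∏ i, |cos (2 * π * (l * w i).val / p)|
      ≤ exp (-(2 * ∑ i, distRZ ((2 * l * w i).val / p) ^ 2)) := by
  rw [mul_sum, ← sum_neg_distrib, exp_sum]
  gcongr with i
  simpa only [mul_assoc] using abs_cos_two_pi_val_div_le_exp (l * w i)

variable [DecidableEq ι]

lemma sum_stdAddChar_mul_signSum (w : ι → ZMod p) (l : ZMod p) :
    ∑ ξ : ι → Bool, stdAddChar (l * ∑ i, signb (ZMod p) (ξ i) * w i)
      = ∏ i, 2 * (cos (2 * π * (l * w i).val / p) : ℂ) := by
  calc ∑ ξ : ι → Bool, stdAddChar (l * ∑ i, signb (ZMod p) (ξ i) * w i)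
      = ∑ ξ : ι → Bool, ∏ i, stdAddChar (signb (ZMod p) (ξ i) * (l * w i)) := by
        refine sum_congr rfl fun ξ _ => ?_
        rw [mul_sum, AddChar.map_sum_eq_prod]
        simp only [mul_left_comm]
    _ = ∏ i, ∑ s : Bool, stdAddChar (signb (ZMod p) s * (l * w i)) := by
        rw [prod_univ_sum, Fintype.piFinset_univ]
    _ = ∏ i, 2 * (cos (2 * π * (l * w i).val / p) : ℂ) := by
        simp only [Fintype.sum_bool, signb, if_true, Bool.false_eq_true, if_false, one_mul,
          neg_one_mul, stdAddChar_add_stdAddChar_neg]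

lemma natCast_mul_card_filter_eq (w : ι → ZMod p) (x : ZMod p) :
    (p : ℂ) * #{ξ : ι → Bool | ∑ i, signb (ZMod p) (ξ i) * w i = x}
      = ∑ l, stdAddChar (-(l * x)) * ∑ ξ : ι → Bool,
          stdAddChar (l * ∑ i, signb (ZMod p) (ξ i) * w i) := by
  have horth (ξ : ι → Bool) : ∑ l : ZMod p, stdAddChar (l * (∑ i, signb (ZMod p) (ξ i) * w i - x))
      = if ∑ i, signb (ZMod p) (ξ i) * w i = x then (p : ℂ) else 0 := by
    simp [AddChar.sum_mulShift _ (isPrimitive_stdAddChar p), sub_eq_zero]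
  have hshift (l : ZMod p) : stdAddChar (-(l * x)) * ∑ ξ : ι → Bool,
      stdAddChar (l * ∑ i, signb (ZMod p) (ξ i) * w i)
        = ∑ ξ : ι → Bool, stdAddChar (l * (∑ i, signb (ZMod p) (ξ i) * w i - x)) := by
    refine (mul_sum _ _ _).trans (sum_congr rfl fun ξ _ => ?_)
    rw [← AddChar.map_add_eq_mul, mul_sub, neg_add_eq_sub]
  rw [sum_congr rfl fun l _ => hshift l, sum_comm, sum_congr rfl fun ξ _ => horth ξ,
    ← sum_filter, sum_const, nsmul_eq_mul, mul_comm]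

lemma natCast_mul_card_filter_sub_eq (w : ι → ZMod p) (x : ZMod p) :
    (p : ℂ) * #{ξ : ι → Bool | ∑ i, signb (ZMod p) (ξ i) * w i = x} - 2 ^ Fintype.card ι
      = ∑ l ∈ univ.erase 0,
          stdAddChar (-(l * x)) * ∏ i, 2 * (cos (2 * π * (l * w i).val / p) : ℂ) := by
  rw [natCast_mul_card_filter_eq, ← add_sum_erase _ _ (mem_univ 0)]
  simp [sum_stdAddChar_mul_signSum]

lemma abs_prob_sub_inv_le (w : ι → ZMod p) (x : ZMod p) :
    |prob (fun ξ : ι → Bool => ∑ i, signb (ZMod p) (ξ i) * w i = x) - 1 / p|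
      ≤ (∑ l ∈ univ.erase 0, ∏ i, |cos (2 * π * (l * w i).val / p)|) / p := by
  set N : ℕ := #{ξ : ι → Bool | ∑ i, signb (ZMod p) (ξ i) * w i = x}
  have hp : (0 : ℝ) < p := by exact_mod_cast Nat.pos_of_neZero p
  have h2n : (0 : ℝ) < 2 ^ Fintype.card ι := by positivity
  have hnorm : |(p : ℝ) * N - 2 ^ Fintype.card ι|
      ≤ 2 ^ Fintype.card ι * ∑ l ∈ univ.erase 0, ∏ i, |cos (2 * π * (l * w i).val / p)| := by
    have hcast : (((p * N - 2 ^ Fintype.card ι : ℝ)) : ℂ)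
        = (p : ℂ) * N - 2 ^ Fintype.card ι := by push_cast; ring
    rw [← Real.norm_eq_abs, ← Complex.norm_real, hcast, natCast_mul_card_filter_sub_eq, mul_sum]
    refine (norm_sum_le _ _).trans (sum_le_sum fun l _ => le_of_eq ?_)
    rw [norm_mul, stdAddChar_apply, Circle.norm_coe, one_mul, prod_mul_distrib, prod_const,
      card_univ, norm_mul, norm_pow, norm_prod, Complex.norm_two]
    simp only [Complex.norm_real, Real.norm_eq_abs]
  have hprob : prob (fun ξ : ι → Bool => ∑ i, signb (ZMod p) (ξ i) * w i = x) - 1 / p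
      = ((p : ℝ) * N - 2 ^ Fintype.card ι) / (p * 2 ^ Fintype.card ι) := by
    rw [prob_eq_card_filter_div, Fintype.card_fun, Fintype.card_bool, Nat.cast_pow, Nat.cast_two]
    field_simp
    rw [mul_comm]
  rw [hprob, abs_div, abs_of_pos (mul_pos hp h2n)]
  calc _ ≤ 2 ^ Fintype.card ι * (∑ l ∈ univ.erase 0, ∏ i, |cos (2 * π * (l * w i).val / p)|)
        / (p * 2 ^ Fintype.card ι) := by gcongr
    _ = _ := by field_simp

end ZMod

lemma disc_le_of_forall_prod_abs_cos_le {p : ℕ} [NeZero p] {ι : Type*} [Fintype ι]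
    [DecidableEq ι] (w : ι → ZMod p) {ε : ℝ}
    (h : ∀ l : ZMod p, l ≠ 0 → ∏ i, |cos (2 * π * (l * w i).val / p)| ≤ ε) :
    disc p w ≤ (p - 1) * ε / p := by
  refine ciSup_le fun x => (ZMod.abs_prob_sub_inv_le w x).trans ?_
  gcongr
  calc _ ≤ #(univ.erase (0 : ZMod p)) • ε :=
        sum_le_card_nsmul _ _ _ fun l hl => h l (ne_of_mem_erase hl)
    _ = (p - 1) * ε := by
      rw [card_erase_of_mem (mem_univ _), card_univ, ZMod.card, nsmul_eq_mul,
        Nat.cast_pred (Nat.pos_of_neZero p)]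

theorem structured_frequency_of_large_disc_general (p : ℕ) (hodd : Odd p)
    (m : ℕ) (b : Fin m → ZMod p)
    (hb : 1 / (p : ℝ) ^ 2 < disc p b) :
    ∃ l : ZMod p, l ≠ 0 ∧
      ∑ j, distRZ (((l * b j).val : ℝ) / p) ^ 2 ≤ 2 * Real.log p := by
  have : NeZero p := ⟨hodd.pos.ne'⟩
  have hp : (0 : ℝ) < p := by exact_mod_cast hodd.pos
  have h2 : IsUnit (2 : ZMod p) := by
    simpa using (ZMod.isUnit_iff_coprime 2 p).2 (Nat.coprime_two_left.2 hodd)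
  by_contra! hlarge
  have hcos (l : ZMod p) (hl : l ≠ 0) : ∏ j, |cos (2 * π * (l * b j).val / p)| ≤ 1 / p ^ 4 :=
    calc ∏ j, |cos (2 * π * (l * b j).val / p)|
        ≤ exp (-(2 * ∑ j, distRZ ((2 * l * b j).val / p) ^ 2)) := ZMod.prod_abs_cos_le_exp b l
      _ ≤ exp (-(4 * log p)) := by
          have := hlarge (2 * l) (mt h2.mul_right_eq_zero.1 hl)
          exact exp_le_exp.2 (by linarith)
      _ = 1 / p ^ 4 := by
          rw [Real.exp_neg, one_div, ← exp_log (pow_pos hp 4), log_pow]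
          norm_num
  have hsmall : (p - 1) * (1 / p ^ 4) / p < 1 / (p : ℝ) ^ 2 := by
    have hp1 : (1 : ℝ) ≤ p := by exact_mod_cast hodd.pos
    rw [mul_one_div, div_div, div_lt_div_iff₀ (by positivity) (by positivity)]
    nlinarith [pow_le_pow_right₀ hp1 (show 3 ≤ 5 by norm_num)]
  exact (hb.trans_le (disc_le_of_forall_prod_abs_cos_le b hcos)).not_gt hsmall

/-- If `b ∈ F_p^m` has discrepancy greater than `1/p²`, then there is a nonzero
frequency `ℓ` with `∑_j ‖ℓ b_j / p‖²_{ℝ/ℤ} ≤ 2 log p`. -/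
theorem structured_frequency_of_large_disc (p : ℕ) [Fact p.Prime] (hodd : Odd p)
    (m : ℕ) (hm : 1 ≤ m) (b : Fin m → ZMod p)
    (hb : 1 / (p : ℝ) ^ 2 < disc p b) :
    ∃ l : ZMod p, l ≠ 0 ∧
      ∑ j, distRZ (((l * b j).val : ℝ) / p) ^ 2 ≤ 2 * Real.log p :=
  structured_frequency_of_large_disc_general p hodd m b hb
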